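/- arXiv:1807.09727 — 3 statements merged into one kernel-verified Lean document; each statement's English description precedes it below -/
import Mathlib

section
/- Let Ω ⊆ ℝ^N (N ≥ 3) be an open set, let b, c : Ω → ℝ be continuous with c ≥ 0, and suppose u ∈ C²(Ω) is a positive classical supersolution of −Δu + b(x)|∇u| = c(x)u on Ω, i.e. u > 0 and −Δu(x) + b(x)|∇u(x)| ≥ c(x)u(x) for all x ∈ Ω. Then for every test function φ ∈ C_c^∞(Ω) we have √(∫_Ω c φ² dx) ≤ √(∫_Ω |∇φ|² dx) + √(∫_Ω (b²/4) φ² dx). -/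
open MeasureTheory

/-- The Laplacian of a function on Euclidean space. -/
noncomputable def lap {N : ℕ} (f : EuclideanSpace ℝ (Fin N) → ℝ)
    (x : EuclideanSpace ℝ (Fin N)) : ℝ :=
  ∑ i, fderiv ℝ (fun y => fderiv ℝ f y (EuclideanSpace.single i 1)) x (EuclideanSpace.single i 1)

/-!
With `v = log u` the supersolution inequality becomes the Riccati inequality
`c ≤ -Δv + b|∇v| - |∇v|²` on `Ω`. Testing it against `φ²` and integrating by parts gives
`∫ c φ² ≤ ∫ 2φ⟪∇v, ∇φ⟫ + (b|∇v| - |∇v|²) φ²`, and completing the square in `|∇v|` bounds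
the integrand by `(|∇φ| + |b||φ|/2)²`. Minkowski's inequality in `L²` finishes the proof.
-/

open Function Filter Topology
open scoped Gradient RealInnerProductSpace

theorem ContinuousOn.integrable_of_forall_notMem_eq_zero {X : Type*} [TopologicalSpace X]
    [MeasurableSpace X] [OpensMeasurableSpace X] [T2Space X] {μ : Measure X}
    [IsFiniteMeasureOnCompacts μ] {k : X → ℝ} {K : Set X} (hk : ContinuousOn k K)
    (hK : IsCompact K) (h0 : ∀ x ∉ K, k x = 0) : Integrable k μ :=
  (hk.integrableOn_compact hK).integrable_of_forall_notMem_eq_zero h0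

theorem integral_add_sq_le_sq_sqrt_add {α : Type*} [MeasurableSpace α] {μ : Measure α}
    {f g : α → ℝ} (hf : MemLp f 2 μ) (hg : MemLp g 2 μ) :
    ∫ x, (f x + g x) ^ 2 ∂μ ≤ (√(∫ x, f x ^ 2 ∂μ) + √(∫ x, g x ^ 2 ∂μ)) ^ 2 := by
  have hf2 := (memLp_two_iff_integrable_sq hf.1).1 hf
  have hg2 := (memLp_two_iff_integrable_sq hg.1).1 hg
  have hfg : Integrable (fun x => f x * g x) μ := hf.integrable_mul hg
  have hcs : ∫ x, f x * g x ∂μ ≤ √(∫ x, f x ^ 2 ∂μ) * √(∫ x, g x ^ 2 ∂μ) := by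
    have := integral_mul_norm_le_Lp_mul_Lq (p := 2) (q := 2) Real.HolderConjugate.two_two
      (by simpa using hf) (by simpa using hg)
    simp only [Real.norm_eq_abs, Real.rpow_two, sq_abs, ← Real.sqrt_eq_rpow] at this
    exact (integral_mono hfg hfg.abs fun x => le_abs_self _).trans
      (by simpa [abs_mul] using this)
  calc ∫ x, (f x + g x) ^ 2 ∂μ
      = ∫ x, f x ^ 2 ∂μ + 2 * ∫ x, f x * g x ∂μ + ∫ x, g x ^ 2 ∂μ := by
        rw [show (fun x => (f x + g x) ^ 2) = fun x => f x ^ 2 + 2 * (f x * g x) + g x ^ 2 by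
            ext; ring,
          integral_add (μ := μ) (f := fun x => f x ^ 2 + 2 * (f x * g x))
            (hf2.add (hfg.const_mul 2)) hg2, integral_add hf2 (hfg.const_mul 2),
          integral_const_mul]
    _ ≤ (√(∫ x, f x ^ 2 ∂μ) + √(∫ x, g x ^ 2 ∂μ)) ^ 2 := by
        rw [add_sq, Real.sq_sqrt (integral_nonneg fun x => sq_nonneg _),
          Real.sq_sqrt (integral_nonneg fun x => sq_nonneg _)]
        linarith

theorem two_mul_inner_add_sub_sq_mul_sq_le {F : Type*} [NormedAddCommGroup F]
    [InnerProductSpace ℝ F] (a w : F) (t β : ℝ) :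
    2 * t * ⟪w, a⟫ + (β * ‖w‖ - ‖w‖ ^ 2) * t ^ 2 ≤ (‖a‖ + |β| * |t| / 2) ^ 2 := by
  have hinner : t * ⟪w, a⟫ ≤ |t| * (‖w‖ * ‖a‖) :=
    calc t * ⟪w, a⟫ ≤ |t| * |⟪w, a⟫| := (le_abs_self _).trans_eq (abs_mul _ _)
      _ ≤ |t| * (‖w‖ * ‖a‖) := by gcongr; exact abs_real_inner_le_norm w a
  have hβ : β * ‖w‖ * |t| ^ 2 ≤ |β| * ‖w‖ * |t| ^ 2 := by
    gcongr
    exact le_abs_self β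
  rw [← sq_abs t]
  nlinarith [sq_nonneg (‖a‖ + |β| * |t| / 2 - |t| * ‖w‖)]

theorem gradient_eq_zero_of_notMem_tsupport {F : Type*} [NormedAddCommGroup F]
    [InnerProductSpace ℝ F] [CompleteSpace F] {f : F → ℝ} {x : F} (hx : x ∉ tsupport f) :
    ∇ f x = 0 := by
  rw [gradient, fderiv_of_notMem_tsupport ℝ hx, map_zero]

theorem inner_gradient_sq {F : Type*} [NormedAddCommGroup F] [InnerProductSpace ℝ F]
    [CompleteSpace F] {f : F → ℝ} {x : F} (hf : DifferentiableAt ℝ f x) (w : F) :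
    ⟪w, ∇ (fun y => f y ^ 2) x⟫ = 2 * f x * ⟪w, ∇ f x⟫ := by
  rw [real_inner_comm, inner_gradient_left, real_inner_comm, inner_gradient_left,
    fderiv_fun_pow 2 hf]
  simp [mul_assoc]

theorem ContDiff.continuous_gradient {F : Type*} [NormedAddCommGroup F]
    [InnerProductSpace ℝ F] [CompleteSpace F] {f : F → ℝ} {n : WithTop ℕ∞}
    (hf : ContDiff ℝ n f) (hn : n ≠ 0) : Continuous (∇ f) :=
  (InnerProductSpace.toDual ℝ F).symm.continuous.comp (hf.continuous_fderiv hn)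

theorem ContDiffOn.continuousOn_gradient {F : Type*} [NormedAddCommGroup F]
    [InnerProductSpace ℝ F] [CompleteSpace F] {f : F → ℝ} {s : Set F} {n : WithTop ℕ∞}
    (hf : ContDiffOn ℝ n f s) (hs : IsOpen s) (hn : 1 ≤ n) : ContinuousOn (∇ f) s :=
  (InnerProductSpace.toDual ℝ F).symm.continuous.comp_continuousOn
    (hf.continuousOn_fderiv_of_isOpen hs hn)

theorem norm_gradient_log {F : Type*} [NormedAddCommGroup F] [InnerProductSpace ℝ F]
    [CompleteSpace F] {u : F → ℝ} {x : F} (hu : DifferentiableAt ℝ u x) (hx : 0 < u x) :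
    ‖∇ (fun y => Real.log (u y)) x‖ = ‖∇ u x‖ / u x := by
  rw [gradient, gradient, fderiv.log hu hx.ne', map_smul, norm_smul, Real.norm_eq_abs,
    abs_inv, abs_of_pos hx, inv_mul_eq_div]

theorem fderiv_fderiv_log_apply {F : Type*} [NormedAddCommGroup F] [NormedSpace ℝ F]
    {u : F → ℝ} {x : F} (hu : ContDiffAt ℝ 2 u x) (hx : 0 < u x) (v : F) :
    fderiv ℝ (fun y => fderiv ℝ (fun z => Real.log (u z)) y v) x v =
      fderiv ℝ (fun y => fderiv ℝ u y v) x v / u x - (fderiv ℝ u x v / u x) ^ 2 := by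
  have hdu : ∀ᶠ y in 𝓝 x, DifferentiableAt ℝ u y :=
    (hu.eventually (by simp)).mono fun y hy => hy.differentiableAt (by norm_num)
  have hlog : (fun y => fderiv ℝ (fun z => Real.log (u z)) y v)
      =ᶠ[𝓝 x] fun y => (u y)⁻¹ * fderiv ℝ u y v := by
    filter_upwards [hdu, hu.continuousAt.eventually (lt_mem_nhds hx)] with y hdy hy
    rw [fderiv.log hdy hy.ne']
    rfl
  have hinv : HasFDerivAt (fun y => (u y)⁻¹) (-((u x) ^ 2)⁻¹ • fderiv ℝ u x) x :=
    (hasDerivAt_inv hx.ne').comp_hasFDerivAt x (hdu.self_of_nhds).hasFDerivAt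
  have hdir : DifferentiableAt ℝ (fun y => fderiv ℝ u y v) x :=
    ((hu.fderiv_right (m := 1) (by norm_num)).differentiableAt one_ne_zero).clm_apply
      (differentiableAt_const v)
  rw [hlog.fderiv_eq, fderiv_fun_mul hinv.differentiableAt hdir, hinv.fderiv]
  simp only [add_apply, smul_apply, smul_eq_mul]
  field_simp
  ring

section Euclidean

variable {N : ℕ}

local notation "E" => EuclideanSpace ℝ (Fin N)

theorem inner_gradient_eq_sum (f g : E → ℝ) (x : E) :
    ⟪∇ f x, ∇ g x⟫ =
      ∑ i, fderiv ℝ f x (EuclideanSpace.single i 1) * fderiv ℝ g x (EuclideanSpace.single i 1) := by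
  have hcoord (h : E → ℝ) (i : Fin N) : ∇ h x i = fderiv ℝ h x (EuclideanSpace.single i 1) := by
    rw [← inner_gradient_left, EuclideanSpace.inner_single_right, one_mul, conj_trivial]
  simp only [PiLp.inner_apply, hcoord, RCLike.inner_apply, conj_trivial, mul_comm]

theorem norm_gradient_sq_eq_sum (f : E → ℝ) (x : E) :
    ‖∇ f x‖ ^ 2 = ∑ i, fderiv ℝ f x (EuclideanSpace.single i 1) ^ 2 := by
  rw [← real_inner_self_eq_norm_sq, inner_gradient_eq_sum]
  simp only [sq]

theorem lap_log {u : E → ℝ} {x : E} (hu : ContDiffAt ℝ 2 u x) (hx : 0 < u x) :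
    lap (fun y => Real.log (u y)) x = lap u x / u x - (‖∇ u x‖ / u x) ^ 2 := by
  simp only [lap, fderiv_fderiv_log_apply hu hx, Finset.sum_sub_distrib, Finset.sum_div, div_pow,
    norm_gradient_sq_eq_sum]

theorem le_neg_lap_log_of_supersolution {u : E → ℝ} {x : E} {b c : ℝ} (hu : ContDiffAt ℝ 2 u x)
    (hx : 0 < u x) (hsuper : c * u x ≤ -lap u x + b * ‖∇ u x‖) :
    c ≤ -lap (fun y => Real.log (u y)) x + b * ‖∇ (fun y => Real.log (u y)) x‖ -
      ‖∇ (fun y => Real.log (u y)) x‖ ^ 2 := by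
  rw [lap_log hu hx, norm_gradient_log (hu.differentiableAt (by norm_num)) hx]
  have := div_le_div_of_nonneg_right hsuper hx.le
  rw [mul_div_cancel_right₀ _ hx.ne'] at this
  linarith [show (-lap u x + b * ‖∇ u x‖) / u x = -(lap u x / u x) + b * (‖∇ u x‖ / u x) by ring]

theorem ContDiffOn.continuousOn_lap {g : E → ℝ} {Ω : Set E} (hg : ContDiffOn ℝ 2 g Ω)
    (hΩ : IsOpen Ω) : ContinuousOn (lap g) Ω := by
  have hdir (i : Fin N) : ContDiffOn ℝ 1 (fun y => fderiv ℝ g y (EuclideanSpace.single i 1)) Ω :=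
    (hg.fderiv_of_isOpen hΩ (by norm_num)).clm_apply contDiffOn_const
  unfold lap
  exact continuousOn_finsetSum _ fun i _ =>
    ((hdir i).continuousOn_fderiv_of_isOpen hΩ le_rfl).clm_apply continuousOn_const

theorem integral_lap_mul_eq_neg_integral_inner_gradient {g h : E → ℝ} {Ω : Set E}
    (hΩ : IsOpen Ω) (hg : ContDiffOn ℝ 2 g Ω) (hh : ContDiff ℝ 1 h) (hhc : HasCompactSupport h)
    (hhΩ : tsupport h ⊆ Ω) :
    ∫ x, lap g x * h x = -∫ x, ⟪∇ g x, ∇ h x⟫ := by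
  -- Integration by parts only needs `g` to be differentiable on `tsupport h ⊆ Ω`.
  set e : Fin N → E := fun i => EuclideanSpace.single i 1
  have hdir (i : Fin N) : ContDiffOn ℝ 1 (fun y => fderiv ℝ g y (e i)) Ω :=
    (hg.fderiv_of_isOpen hΩ (by norm_num)).clm_apply contDiffOn_const
  have hint (k : E → ℝ) (hk : ContinuousOn k Ω) (h0 : ∀ x ∉ tsupport h, k x = 0) :
      Integrable k :=
    (hk.mono hhΩ).integrable_of_forall_notMem_eq_zero hhc h0
  have hh0 (x : E) (hx : x ∉ tsupport h) : h x = 0 := image_eq_zero_of_notMem_tsupport hx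
  have hdh0 (x : E) (hx : x ∉ tsupport h) : fderiv ℝ h x = 0 := fderiv_of_notMem_tsupport ℝ hx
  have hcont_dh (i : Fin N) : ContinuousOn (fun x => fderiv ℝ h x (e i)) Ω :=
    ((hh.continuous_fderiv one_ne_zero).clm_apply continuous_const).continuousOn
  have hint_dh (i : Fin N) : Integrable fun x => fderiv ℝ h x (e i) * fderiv ℝ g x (e i) :=
    hint _ ((hcont_dh i).mul (hdir i).continuousOn) fun x hx => by simp [hdh0 x hx]
  have hint_d2 (i : Fin N) :
      Integrable fun x => h x * fderiv ℝ (fun y => fderiv ℝ g y (e i)) x (e i) :=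
    hint _ (hh.continuous.continuousOn.mul
        (((hdir i).continuousOn_fderiv_of_isOpen hΩ le_rfl).clm_apply continuousOn_const))
      fun x hx => by simp [hh0 x hx]
  have hibp (i : Fin N) :
      ∫ x, h x * fderiv ℝ (fun y => fderiv ℝ g y (e i)) x (e i) =
        -∫ x, fderiv ℝ h x (e i) * fderiv ℝ g x (e i) :=
    integral_mul_fderiv_eq_neg_fderiv_mul_of_integrable (hint_dh i) (hint_d2 i)
      (hint _ (hh.continuous.continuousOn.mul (hdir i).continuousOn)
        fun x hx => by simp [hh0 x hx])
      (fun x _ => hh.differentiable one_ne_zero x)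
      fun x hx => ((hdir i).differentiableOn one_ne_zero x (hhΩ hx)).differentiableAt
        (hΩ.mem_nhds (hhΩ hx))
  calc ∫ x, lap g x * h x
      = ∑ i, ∫ x, h x * fderiv ℝ (fun y => fderiv ℝ g y (e i)) x (e i) := by
        rw [← integral_finsetSum _ fun i _ => hint_d2 i]
        simp only [lap, Finset.sum_mul, mul_comm (h _)]
        rfl
    _ = -∫ x, ⟪∇ g x, ∇ h x⟫ := by
        simp only [hibp, Finset.sum_neg_distrib, inner_gradient_eq_sum, mul_comm (fderiv ℝ g _ _)]
        rw [integral_finsetSum _ fun i _ => hint_dh i]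

theorem integral_mul_sq_le_of_riccati {Ω : Set E} (hΩ : IsOpen Ω) {b c v φ : E → ℝ}
    (hb : ContinuousOn b Ω) (hc : ContinuousOn c Ω) (hv : ContDiffOn ℝ 2 v Ω)
    (hriccati : ∀ x ∈ Ω, c x ≤ -lap v x + b x * ‖∇ v x‖ - ‖∇ v x‖ ^ 2)
    (hφ : ContDiff ℝ 1 φ) (hφc : HasCompactSupport φ) (hφΩ : tsupport φ ⊆ Ω) :
    ∫ x, c x * φ x ^ 2 ≤ ∫ x, (‖∇ φ x‖ + |b x| * |φ x| / 2) ^ 2 := by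
  have hφ0 (x : E) (hx : x ∉ tsupport φ) : φ x = 0 := image_eq_zero_of_notMem_tsupport hx
  have hint (k : E → ℝ) (hk : ContinuousOn k Ω) (h0 : ∀ x ∉ tsupport φ, k x = 0) :
      Integrable k :=
    (hk.mono hφΩ).integrable_of_forall_notMem_eq_zero hφc h0
  have hφ2 : ContDiff ℝ 1 fun x => φ x ^ 2 := hφ.pow 2
  have hgrad_v : ContinuousOn (∇ v) Ω := hv.continuousOn_gradient hΩ (by norm_num)
  have hgrad_φ2 (x : E) : ⟪∇ v x, ∇ (fun y => φ y ^ 2) x⟫ = 2 * φ x * ⟪∇ v x, ∇ φ x⟫ :=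
    inner_gradient_sq (hφ.differentiable one_ne_zero x) _
  set R : E → ℝ := fun x => (b x * ‖∇ v x‖ - ‖∇ v x‖ ^ 2) * φ x ^ 2
  have hR : Integrable R :=
    hint _ (((hb.mul hgrad_v.norm).sub (hgrad_v.norm.pow 2)).mul
      (hφ.continuous.pow 2).continuousOn)
      fun x hx => by simp [R, hφ0 x hx]
  have hlap : Integrable fun x => lap v x * φ x ^ 2 :=
    hint _ ((hv.continuousOn_lap hΩ).mul (hφ.continuous.pow 2).continuousOn)
      fun x hx => by simp [hφ0 x hx]
  have hI : Integrable fun x => ⟪∇ v x, ∇ (fun y => φ y ^ 2) x⟫ :=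
    hint _ (hgrad_v.inner (hφ2.continuous_gradient one_ne_zero).continuousOn)
      fun x hx => by simp [hgrad_φ2, hφ0 x hx]
  calc ∫ x, c x * φ x ^ 2 ≤ ∫ x, (-(lap v x * φ x ^ 2) + R x) := by
        refine integral_mono (hint _ (hc.mul (hφ.continuous.pow 2).continuousOn)
          fun x hx => by simp [hφ0 x hx]) (hlap.neg.add hR) fun x => ?_
        by_cases hx : x ∈ Ω
        · have := mul_le_mul_of_nonneg_right (hriccati x hx) (sq_nonneg (φ x))
          simp only [R]
          linarith
        · simp [R, hφ0 x fun h => hx (hφΩ h)]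
    _ = ∫ x, (⟪∇ v x, ∇ (fun y => φ y ^ 2) x⟫ + R x) := by
        rw [integral_add (f := fun x => -(lap v x * φ x ^ 2)) hlap.neg hR, integral_neg,
          integral_lap_mul_eq_neg_integral_inner_gradient hΩ hv hφ2
            (hφc.comp_left (g := fun y : ℝ => y ^ 2) (by norm_num))
            ((closure_mono (support_comp_subset (g := fun y : ℝ => y ^ 2) (by norm_num) φ)).trans
              hφΩ),
          neg_neg, integral_add hI hR]
    _ ≤ ∫ x, (‖∇ φ x‖ + |b x| * |φ x| / 2) ^ 2 := by
        refine integral_mono (hI.add hR) (hint _ ?_ fun x hx => ?_) fun x => ?_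
        · exact (((hφ.continuous_gradient one_ne_zero).norm.continuousOn.add
            ((hb.abs.mul hφ.continuous.abs.continuousOn).div_const 2)).pow 2)
        · simp [gradient_eq_zero_of_notMem_tsupport hx, hφ0 x hx]
        · simp only [hgrad_φ2, R]
          exact two_mul_inner_add_sub_sq_mul_sq_le _ _ _ _

theorem sqrt_integral_mul_sq_le_of_riccati {Ω : Set E} (hΩ : IsOpen Ω) {b c v φ : E → ℝ}
    (hb : ContinuousOn b Ω) (hc : ContinuousOn c Ω) (hv : ContDiffOn ℝ 2 v Ω)
    (hriccati : ∀ x ∈ Ω, c x ≤ -lap v x + b x * ‖∇ v x‖ - ‖∇ v x‖ ^ 2)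
    (hφ : ContDiff ℝ 1 φ) (hφc : HasCompactSupport φ) (hφΩ : tsupport φ ⊆ Ω) :
    √(∫ x, c x * φ x ^ 2) ≤ √(∫ x, ‖∇ φ x‖ ^ 2) + √(∫ x, b x ^ 2 / 4 * φ x ^ 2) := by
  have hφ0 (x : E) (hx : x ∉ tsupport φ) : φ x = 0 := image_eq_zero_of_notMem_tsupport hx
  have hgrad : MemLp (fun x => ‖∇ φ x‖) 2 :=
    (hφ.continuous_gradient one_ne_zero).norm.memLp_of_hasCompactSupport
      (HasCompactSupport.intro hφc fun x hx => by simp [gradient_eq_zero_of_notMem_tsupport hx])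
  have hweight : MemLp (fun x => |b x| * |φ x| / 2) 2 := by
    have hcont : ContinuousOn (fun x => |b x| * |φ x| / 2) (tsupport φ) :=
      ((hb.abs.mul hφ.continuous.abs.continuousOn).div_const 2).mono hφΩ
    refine (memLp_two_iff_integrable_sq
      (hcont.integrable_of_forall_notMem_eq_zero hφc fun x hx => ?_).1).2
      ((hcont.pow 2).integrable_of_forall_notMem_eq_zero hφc fun x hx => ?_) <;>
    simp [hφ0 x hx]
  calc √(∫ x, c x * φ x ^ 2)
      ≤ √((√(∫ x, ‖∇ φ x‖ ^ 2) + √(∫ x, (|b x| * |φ x| / 2) ^ 2)) ^ 2) :=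
        Real.sqrt_le_sqrt ((integral_mul_sq_le_of_riccati hΩ hb hc hv hriccati hφ hφc hφΩ).trans
          (integral_add_sq_le_sq_sqrt_add hgrad hweight))
    _ = √(∫ x, ‖∇ φ x‖ ^ 2) + √(∫ x, b x ^ 2 / 4 * φ x ^ 2) := by
        rw [Real.sqrt_sq (by positivity)]
        congr 3 with x
        rw [div_pow, mul_pow, sq_abs, sq_abs]
        ring

end Euclidean

theorem stmt_4_general {N : ℕ} (Ω : Set (EuclideanSpace ℝ (Fin N))) (hΩ : IsOpen Ω)
    (b c : EuclideanSpace ℝ (Fin N) → ℝ)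
    (hb : ContinuousOn b Ω) (hc : ContinuousOn c Ω)
    (u : EuclideanSpace ℝ (Fin N) → ℝ) (hu : ContDiffOn ℝ 2 u Ω)
    (hupos : ∀ x ∈ Ω, 0 < u x)
    (hsuper : ∀ x ∈ Ω, c x * u x ≤ -(lap u x) + b x * ‖gradient u x‖)
    (φ : EuclideanSpace ℝ (Fin N) → ℝ)
    (hφ : ContDiff ℝ (⊤ : ℕ∞) φ) (hφc : HasCompactSupport φ) (hφΩ : tsupport φ ⊆ Ω) :
    Real.sqrt (∫ x in Ω, c x * (φ x) ^ 2) ≤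
      Real.sqrt (∫ x in Ω, ‖gradient φ x‖ ^ 2) +
        Real.sqrt (∫ x in Ω, (b x) ^ 2 / 4 * (φ x) ^ 2) := by
  have hφ0 (x : EuclideanSpace ℝ (Fin N)) (hx : x ∉ tsupport φ) : φ x = 0 :=
    image_eq_zero_of_notMem_tsupport hx
  have hΩ_univ {f : EuclideanSpace ℝ (Fin N) → ℝ} (hf : ∀ x ∉ tsupport φ, f x = 0) :
      ∫ x in Ω, f x = ∫ x, f x :=
    setIntegral_eq_integral_of_forall_compl_eq_zero fun x hx => hf x fun h => hx (hφΩ h)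
  rw [hΩ_univ fun x hx => by simp [hφ0 x hx],
    hΩ_univ fun x hx => by simp [gradient_eq_zero_of_notMem_tsupport hx],
    hΩ_univ fun x hx => by simp [hφ0 x hx]]
  exact sqrt_integral_mul_sq_le_of_riccati hΩ hb hc (hu.log fun x hx => (hupos x hx).ne')
    (fun x hx => le_neg_lap_log_of_supersolution (hu.contDiffAt (hΩ.mem_nhds hx)) (hupos x hx)
      (hsuper x hx))
    (hφ.of_le (by exact_mod_cast le_top)) hφc hφΩ

theorem stmt_4 {N : ℕ} (hN : 3 ≤ N) (Ω : Set (EuclideanSpace ℝ (Fin N))) (hΩ : IsOpen Ω)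
    (b c : EuclideanSpace ℝ (Fin N) → ℝ)
    (hb : ContinuousOn b Ω) (hc : ContinuousOn c Ω) (hc0 : ∀ x ∈ Ω, 0 ≤ c x)
    (u : EuclideanSpace ℝ (Fin N) → ℝ) (hu : ContDiffOn ℝ 2 u Ω)
    (hupos : ∀ x ∈ Ω, 0 < u x)
    (hsuper : ∀ x ∈ Ω, c x * u x ≤ -(lap u x) + b x * ‖gradient u x‖)
    (φ : EuclideanSpace ℝ (Fin N) → ℝ)
    (hφ : ContDiff ℝ (⊤ : ℕ∞) φ) (hφc : HasCompactSupport φ) (hφΩ : tsupport φ ⊆ Ω) :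
    Real.sqrt (∫ x in Ω, c x * (φ x) ^ 2) ≤
      Real.sqrt (∫ x in Ω, ‖gradient φ x‖ ^ 2) +
        Real.sqrt (∫ x in Ω, (b x) ^ 2 / 4 * (φ x) ^ 2) :=
  stmt_4_general Ω hΩ b c hb hc u hu hupos hsuper φ hφ hφc hφΩ
end

section
/- Let Ω ⊆ ℝ^N (N ≥ 3) be an open set, let b, c : Ω → ℝ be continuous with c ≥ 0, and suppose u ∈ C²(Ω) is a positive classical supersolution of −Δu + b(x)|∇u| = c(x)u on Ω, i.e. u > 0 and −Δu(x) + b(x)|∇u(x)| ≥ c(x)u(x) for all x ∈ Ω. Then for every test function φ ∈ C_c^∞(Ω) we have ∫_Ω (c − b²/4) φ² dx ≤ ∫_Ω |∇φ|² dx + 2 √( (∫_Ω |∇φ|² dx) · (∫_Ω (b²/4) φ² dx) ). -/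
/-!
Picone-type argument. With `w = φ² / u`, the vector field `w ∇u` is `C¹` with compact support,
so its divergence `w Δu + ⟪∇w, ∇u⟫` integrates to zero. Multiply the supersolution inequality
by `w ≥ 0` and put `a = (φ / u) ∇u`; then `⟪∇w, ∇u⟫ = 2⟪∇φ, a⟫ - ‖a‖²` and
`w b ‖∇u‖ = b |φ| ‖a‖`, and completing the square in `‖a‖` gives pointwise
`(c - b² / 4) φ² ≤ -div (w ∇u) + ‖∇φ‖² + |b φ| ‖∇φ‖`.
Integrate, and bound `∫ |b φ| ‖∇φ‖` by Cauchy–Schwarz.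
-/

open MeasureTheory

open Set Function InnerProductSpace

section Integral

variable {α : Type*} [MeasurableSpace α] {μ : Measure α}

theorem ContinuousOn.memLp_of_support_subset {E F : Type*} [TopologicalSpace α]
    [OpensMeasurableSpace α] [IsFiniteMeasureOnCompacts μ] [NormedAddCommGroup E] [Zero F]
    {f : α → E} {g : α → F} {Ω : Set α} (hf : ContinuousOn f Ω) (hΩ : IsOpen Ω)
    (hg : HasCompactSupport g) (hgΩ : tsupport g ⊆ Ω) (hfg : support f ⊆ support g)
    (p : ENNReal) : MemLp f p μ :=
  (hf.continuous_of_tsupport_subset hΩ ((closure_mono hfg).trans hgΩ)).memLp_of_hasCompactSupport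
    (hg.mono hfg)

theorem integral_mul_le_sqrt_mul_integral_sq {f g : α → ℝ} (hf0 : 0 ≤ᵐ[μ] f) (hg0 : 0 ≤ᵐ[μ] g)
    (hf : MemLp f 2 μ) (hg : MemLp g 2 μ) :
    ∫ x, f x * g x ∂μ ≤ √((∫ x, f x ^ 2 ∂μ) * ∫ x, g x ^ 2 ∂μ) := by
  have h := integral_mul_le_Lp_mul_Lq_of_nonneg Real.HolderConjugate.two_two hf0 hg0
    (by simpa using hf) (by simpa using hg)
  simp only [Real.rpow_two, one_div] at h
  rwa [Real.sqrt_mul' _ (integral_nonneg fun x => sq_nonneg (g x)), Real.sqrt_eq_rpow,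
    Real.sqrt_eq_rpow, one_div]

theorem integral_le_of_le_neg_add_sq_add_two_mul {L D G H : α → ℝ} (hL : Integrable L μ)
    (hD : Integrable D μ) (hD0 : ∫ x, D x ∂μ = 0) (hG : MemLp G 2 μ) (hH : MemLp H 2 μ)
    (hG0 : ∀ x, 0 ≤ G x) (hH0 : ∀ x, 0 ≤ H x)
    (hle : ∀ᵐ x ∂μ, L x ≤ -D x + (G x ^ 2 + 2 * (G x * H x))) :
    ∫ x, L x ∂μ ≤ ∫ x, G x ^ 2 ∂μ + 2 * √((∫ x, G x ^ 2 ∂μ) * ∫ x, H x ^ 2 ∂μ) := by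
  have hD' : Integrable (fun x => -D x) μ := hD.neg
  have hG2 : Integrable (fun x => G x ^ 2) μ := hG.integrable_sq
  have hGH : Integrable (fun x => 2 * (G x * H x)) μ := (hG.integrable_mul hH).const_mul 2
  have hrest : Integrable (fun x => G x ^ 2 + 2 * (G x * H x)) μ := hG2.add hGH
  calc ∫ x, L x ∂μ ≤ ∫ x, -D x + (G x ^ 2 + 2 * (G x * H x)) ∂μ :=
        integral_mono_ae hL (hD'.add hrest) hle
    _ = ∫ x, G x ^ 2 ∂μ + 2 * ∫ x, G x * H x ∂μ := by
        rw [integral_add hD' hrest, integral_neg, hD0, integral_add hG2 hGH,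
          integral_const_mul, neg_zero, zero_add]
    _ ≤ _ := by
        gcongr
        exact integral_mul_le_sqrt_mul_integral_sq (.of_forall hG0) (.of_forall hH0) hG hH

end Integral

section Calculus

variable {E : Type*} [NormedAddCommGroup E]

theorem ContDiffOn.contDiff_of_tsupport_subset [NormedSpace ℝ E] {F : Type*}
    [NormedAddCommGroup F] [NormedSpace ℝ F] {f : E → F} {Ω : Set E} {n : WithTop ℕ∞}
    (hf : ContDiffOn ℝ n f Ω) (hΩ : IsOpen Ω) (hfΩ : tsupport f ⊆ Ω) : ContDiff ℝ n f := by
  refine contDiff_iff_contDiffAt.2 fun x => ?_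
  by_cases hx : x ∈ Ω
  · exact hf.contDiffAt (hΩ.mem_nhds hx)
  · exact contDiffAt_const.congr_of_eventuallyEq
      (notMem_tsupport_iff_eventuallyEq.1 (hx <| hfΩ ·))

theorem HasCompactSupport.integrable_fderiv_apply [NormedSpace ℝ E] [MeasurableSpace E]
    [OpensMeasurableSpace E] {μ : Measure E} [IsFiniteMeasureOnCompacts μ] {f : E → ℝ}
    (hfc : HasCompactSupport f) (hf : ContDiff ℝ 1 f) (v : E) :
    Integrable (fun x => fderiv ℝ f x v) μ :=
  ((hf.continuous_fderiv one_ne_zero).clm_apply continuous_const).integrable_of_hasCompactSupport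
    (hfc.fderiv_apply (𝕜 := ℝ) v)

theorem HasCompactSupport.memLp_norm_gradient [InnerProductSpace ℝ E] [CompleteSpace E]
    [MeasurableSpace E] [OpensMeasurableSpace E] {μ : Measure E} [IsFiniteMeasureOnCompacts μ]
    {f : E → ℝ} (hfc : HasCompactSupport f) (hf : ContDiff ℝ 1 f) (p : ENNReal) :
    MemLp (fun x => ‖gradient f x‖) p μ :=
  ((toDual ℝ E).symm.continuous.comp (hf.continuous_fderiv one_ne_zero)).norm
    |>.memLp_of_hasCompactSupport ((hfc.fderiv (𝕜 := ℝ)).comp_left (by simp)).norm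

theorem integral_fderiv_apply_eq_zero [NormedSpace ℝ E] [FiniteDimensional ℝ E]
    [MeasurableSpace E] [BorelSpace E] {μ : Measure E} [μ.IsAddHaarMeasure] {f : E → ℝ}
    (hf : ContDiff ℝ 1 f) (hfc : HasCompactSupport f) (v : E) :
    ∫ x, fderiv ℝ f x v ∂μ = 0 := by
  have h := integral_mul_fderiv_eq_neg_fderiv_mul_of_integrable (μ := μ) (f := f)
    (g := fun _ => (1 : ℝ)) (v := v) (by simpa using hfc.integrable_fderiv_apply hf v) (by simp)
    (by simpa using hf.continuous.integrable_of_hasCompactSupport hfc)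
    (fun x _ => hf.differentiable one_ne_zero x) (fun x _ => differentiableAt_const _)
  simpa using h.symm

theorem two_mul_inner_sub_norm_sq_add_mul_norm_le [InnerProductSpace ℝ E] (p a : E) (β : ℝ) :
    2 * inner ℝ p a - ‖a‖ ^ 2 + β * ‖a‖ ≤ ‖p‖ ^ 2 + |β| * ‖p‖ + β ^ 2 / 4 := by
  have hβ : β * ‖a‖ ≤ |β| * ‖a‖ := mul_le_mul_of_nonneg_right (le_abs_self β) (norm_nonneg a)
  nlinarith [real_inner_le_norm p a, sq_nonneg (‖p‖ - ‖a‖ + |β| / 2), sq_abs β]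

variable [NormedSpace ℝ E]

theorem fderiv_sq_div_apply {φ u : E → ℝ} {x : E} (hφ : DifferentiableAt ℝ φ x)
    (hu : DifferentiableAt ℝ u x) (hux : u x ≠ 0) (v : E) :
    fderiv ℝ (fun y => φ y ^ 2 / u y) x v =
      2 * (φ x / u x) * fderiv ℝ φ x v - (φ x / u x) ^ 2 * fderiv ℝ u x v := by
  have hinv := (hasDerivAt_inv hux).comp_hasFDerivAt x hu.hasFDerivAt
  have h : HasFDerivAt (fun y => φ y ^ 2 * (u y)⁻¹) _ x := (hφ.hasFDerivAt.pow 2).mul hinv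
  simp only [← div_eq_mul_inv] at h
  rw [h.fderiv]
  simp only [neg_smul, smul_neg, Nat.add_one_sub_one, pow_one, nsmul_eq_mul, Nat.cast_ofNat,
    add_apply, neg_apply, smul_apply, smul_eq_mul]
  field_simp
  ring

theorem contDiff_sq_div_mul_fderiv {Ω : Set E} {u φ : E → ℝ} (hΩ : IsOpen Ω)
    (hu : ContDiffOn ℝ 2 u Ω) (hupos : ∀ x ∈ Ω, 0 < u x) (hφ : ContDiff ℝ 1 φ)
    (hφΩ : tsupport φ ⊆ Ω) (v : E) :
    ContDiff ℝ 1 (fun y => φ y ^ 2 / u y * fderiv ℝ u y v) := by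
  have hsupp : support (fun y => φ y ^ 2 / u y * fderiv ℝ u y v) ⊆ support φ :=
    fun y hy hφy => hy (by simp [hφy])
  refine ContDiffOn.contDiff_of_tsupport_subset ?_ hΩ ((closure_mono hsupp).trans hφΩ)
  exact ((hφ.contDiffOn.pow 2).div (hu.of_le one_le_two) fun x hx => (hupos x hx).ne').mul
    ((hu.fderiv_of_isOpen hΩ le_rfl).clm_apply contDiffOn_const)

end Calculus

section Divergence

variable {N : ℕ} {F : Fin N → EuclideanSpace ℝ (Fin N) → ℝ} {x : EuclideanSpace ℝ (Fin N)}

noncomputable def divergence (F : Fin N → EuclideanSpace ℝ (Fin N) → ℝ)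
    (x : EuclideanSpace ℝ (Fin N)) : ℝ :=
  ∑ i, fderiv ℝ (F i) x (EuclideanSpace.single i 1)

theorem divergence_mul {w : EuclideanSpace ℝ (Fin N) → ℝ} (hw : DifferentiableAt ℝ w x)
    (hF : ∀ i, DifferentiableAt ℝ (F i) x) :
    divergence (fun i y => w y * F i y) x =
      w x * divergence F x + ∑ i, fderiv ℝ w x (EuclideanSpace.single i 1) * F i x := by
  simp only [divergence, fderiv_fun_mul hw (hF _), add_apply, smul_apply, smul_eq_mul,
    Finset.sum_add_distrib, Finset.mul_sum]
  exact congrArg _ (Finset.sum_congr rfl fun i _ => mul_comm _ _)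

theorem sum_fderiv_single_mul_fderiv_single (f g : EuclideanSpace ℝ (Fin N) → ℝ) :
    ∑ i, fderiv ℝ f x (EuclideanSpace.single i 1) * fderiv ℝ g x (EuclideanSpace.single i 1) =
      fderiv ℝ f x (gradient g x) := by
  rw [← inner_gradient_left, ← (EuclideanSpace.basisFun (Fin N) ℝ).sum_inner_mul_inner]
  simp only [EuclideanSpace.basisFun_apply, inner_gradient_left, inner_gradient_right,
    conj_trivial]

theorem divergence_mul_fderiv {w u : EuclideanSpace ℝ (Fin N) → ℝ} (hw : DifferentiableAt ℝ w x)
    (hu : ContDiffAt ℝ 2 u x) :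
    divergence (fun i y => w y * fderiv ℝ u y (EuclideanSpace.single i 1)) x =
      w x * lap u x + fderiv ℝ w x (gradient u x) := by
  have hu' : DifferentiableAt ℝ (fderiv ℝ u) x :=
    (hu.fderiv_right (m := 1) (by norm_num)).differentiableAt one_ne_zero
  rw [divergence_mul hw fun i => hu'.clm_apply (differentiableAt_const _),
    sum_fderiv_single_mul_fderiv_single]
  rfl

theorem integrable_divergence (hF : ∀ i, ContDiff ℝ 1 (F i))
    (hFc : ∀ i, HasCompactSupport (F i)) : Integrable (divergence F) :=
  integrable_finsetSum _ fun i _ => (hFc i).integrable_fderiv_apply (hF i) _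

theorem setIntegral_divergence_eq_zero {Ω : Set (EuclideanSpace ℝ (Fin N))}
    (hF : ∀ i, ContDiff ℝ 1 (F i)) (hFc : ∀ i, HasCompactSupport (F i))
    (hFΩ : ∀ i, tsupport (F i) ⊆ Ω) : ∫ x in Ω, divergence F x = 0 := by
  rw [setIntegral_eq_integral_of_forall_compl_eq_zero fun x hx => Finset.sum_eq_zero fun i _ => by
      rw [fderiv_of_notMem_tsupport (𝕜 := ℝ) (hx <| hFΩ i ·), zero_apply]]
  unfold divergence
  rw [integral_finsetSum _ fun i _ => (hFc i).integrable_fderiv_apply (hF i) _]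
  exact Finset.sum_eq_zero fun i _ => integral_fderiv_apply_eq_zero (hF i) (hFc i) _

theorem sq_mul_le_neg_divergence_add {u φ b c : EuclideanSpace ℝ (Fin N) → ℝ}
    (hu : ContDiffAt ℝ 2 u x) (hφ : DifferentiableAt ℝ φ x) (hux : 0 < u x)
    (hsuper : c x * u x ≤ -lap u x + b x * ‖gradient u x‖) :
    (c x - b x ^ 2 / 4) * φ x ^ 2 ≤
      -divergence (fun i y => φ y ^ 2 / u y * fderiv ℝ u y (EuclideanSpace.single i 1)) x +
        (‖gradient φ x‖ ^ 2 + |b x * φ x| * ‖gradient φ x‖) := by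
  have hud : DifferentiableAt ℝ u x := hu.differentiableAt two_ne_zero
  have hw : DifferentiableAt ℝ (fun y => φ y ^ 2 / u y) x := by
    simpa only [div_eq_mul_inv] using (hφ.fun_pow 2).fun_mul (hud.fun_inv hux.ne')
  set a := (φ x / u x) • gradient u x
  have key := two_mul_inner_sub_norm_sq_add_mul_norm_le (gradient φ x) a (b x * |φ x|)
  have hinner : inner ℝ (gradient φ x) a = φ x / u x * fderiv ℝ φ x (gradient u x) := by
    rw [real_inner_smul_right, inner_gradient_left]
  have hnorm : ‖a‖ = |φ x| / u x * ‖gradient u x‖ := by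
    rw [norm_smul, Real.norm_eq_abs, abs_div, abs_of_pos hux]
  have hgu : fderiv ℝ u x (gradient u x) = ‖gradient u x‖ ^ 2 := by
    rw [← inner_gradient_left, real_inner_self_eq_norm_sq]
  have hmul : c x * φ x ^ 2 ≤ φ x ^ 2 / u x * (-lap u x + b x * ‖gradient u x‖) := by
    calc c x * φ x ^ 2 = φ x ^ 2 / u x * (c x * u x) := by field_simp
      _ ≤ _ := mul_le_mul_of_nonneg_left hsuper (by positivity)
  have habs : |φ x| ^ 2 = φ x ^ 2 := sq_abs _
  have hnorm_sq :
      (|φ x| / u x * ‖gradient u x‖) ^ 2 = (φ x / u x) ^ 2 * ‖gradient u x‖ ^ 2 := by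
    rw [mul_pow, div_pow, habs, div_pow]
  have hdrift : b x * |φ x| * (|φ x| / u x * ‖gradient u x‖) =
      φ x ^ 2 / u x * (b x * ‖gradient u x‖) := by
    rw [← habs]; ring
  have hb_sq : (b x * |φ x|) ^ 2 = b x ^ 2 * φ x ^ 2 := by rw [mul_pow, habs]
  rw [hinner, hnorm, abs_mul, abs_abs, hnorm_sq, hdrift, hb_sq] at key
  rw [divergence_mul_fderiv hw hu, fderiv_sq_div_apply hφ hud hux.ne', hgu, abs_mul]
  linarith

end Divergence

theorem stmt_5_general {N : ℕ} (Ω : Set (EuclideanSpace ℝ (Fin N))) (hΩ : IsOpen Ω)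
    (b c : EuclideanSpace ℝ (Fin N) → ℝ)
    (hb : ContinuousOn b Ω) (hc : ContinuousOn c Ω)
    (u : EuclideanSpace ℝ (Fin N) → ℝ) (hu : ContDiffOn ℝ 2 u Ω)
    (hupos : ∀ x ∈ Ω, 0 < u x)
    (hsuper : ∀ x ∈ Ω, c x * u x ≤ -(lap u x) + b x * ‖gradient u x‖)
    (φ : EuclideanSpace ℝ (Fin N) → ℝ)
    (hφ : ContDiff ℝ (⊤ : ℕ∞) φ) (hφc : HasCompactSupport φ) (hφΩ : tsupport φ ⊆ Ω) :
    (∫ x in Ω, (c x - (b x) ^ 2 / 4) * (φ x) ^ 2) ≤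
      (∫ x in Ω, ‖gradient φ x‖ ^ 2) +
        2 * Real.sqrt ((∫ x in Ω, ‖gradient φ x‖ ^ 2) *
          (∫ x in Ω, (b x) ^ 2 / 4 * (φ x) ^ 2)) := by
  have hφ1 : ContDiff ℝ 1 φ := hφ.of_le (by exact_mod_cast le_top)
  set F := fun i y => φ y ^ 2 / u y * fderiv ℝ u y (EuclideanSpace.single i 1)
  have hF i : ContDiff ℝ 1 (F i) := contDiff_sq_div_mul_fderiv hΩ hu hupos hφ1 hφΩ _
  have hFφ i : support (F i) ⊆ support φ := fun y hy hφy => hy (by simp [F, hφy])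
  have hFc i : HasCompactSupport (F i) := hφc.mono (hFφ i)
  have hpt : ∀ x ∈ Ω, (c x - b x ^ 2 / 4) * φ x ^ 2 ≤ -divergence F x +
      (‖gradient φ x‖ ^ 2 + 2 * (‖gradient φ x‖ * (|b x * φ x| / 2))) := fun x hx =>
    (sq_mul_le_neg_divergence_add (hu.contDiffAt (hΩ.mem_nhds hx))
      (hφ1.differentiable one_ne_zero x) (hupos x hx) (hsuper x hx)).trans_eq (by ring)
  have hL : MemLp (fun x => (c x - b x ^ 2 / 4) * φ x ^ 2) 1 :=
    ((hc.sub ((hb.pow 2).div_const 4)).mul (hφ1.continuous.pow 2).continuousOn)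
      |>.memLp_of_support_subset hΩ hφc hφΩ (fun y hy hφy => hy (by simp [hφy])) 1
  have hH : MemLp (fun x => |b x * φ x| / 2) 2 :=
    ((hb.mul hφ1.continuous.continuousOn).abs.div_const 2)
      |>.memLp_of_support_subset hΩ hφc hφΩ (fun y hy hφy => hy (by simp [hφy])) 2
  have hH2 : ∫ x in Ω, (|b x * φ x| / 2) ^ 2 = ∫ x in Ω, b x ^ 2 / 4 * φ x ^ 2 :=
    integral_congr_ae (.of_forall fun x => by simp only [div_pow, sq_abs]; ring)
  rw [← hH2]
  exact integral_le_of_le_neg_add_sq_add_two_mul (memLp_one_iff_integrable.1 hL).integrableOn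
    (integrable_divergence hF hFc).integrableOn
    (setIntegral_divergence_eq_zero hF hFc fun i => (closure_mono (hFφ i)).trans hφΩ)
    ((hφc.memLp_norm_gradient hφ1 2).restrict Ω) (hH.restrict Ω)
    (fun x => norm_nonneg _) (fun x => by positivity)
    ((ae_restrict_iff' hΩ.measurableSet).2 (.of_forall hpt))

theorem stmt_5 {N : ℕ} (hN : 3 ≤ N) (Ω : Set (EuclideanSpace ℝ (Fin N))) (hΩ : IsOpen Ω)
    (b c : EuclideanSpace ℝ (Fin N) → ℝ)
    (hb : ContinuousOn b Ω) (hc : ContinuousOn c Ω) (hc0 : ∀ x ∈ Ω, 0 ≤ c x)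
    (u : EuclideanSpace ℝ (Fin N) → ℝ) (hu : ContDiffOn ℝ 2 u Ω)
    (hupos : ∀ x ∈ Ω, 0 < u x)
    (hsuper : ∀ x ∈ Ω, c x * u x ≤ -(lap u x) + b x * ‖gradient u x‖)
    (φ : EuclideanSpace ℝ (Fin N) → ℝ)
    (hφ : ContDiff ℝ (⊤ : ℕ∞) φ) (hφc : HasCompactSupport φ) (hφΩ : tsupport φ ⊆ Ω) :
    (∫ x in Ω, (c x - (b x) ^ 2 / 4) * (φ x) ^ 2) ≤
      (∫ x in Ω, ‖gradient φ x‖ ^ 2) +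
        2 * Real.sqrt ((∫ x in Ω, ‖gradient φ x‖ ^ 2) *
          (∫ x in Ω, (b x) ^ 2 / 4 * (φ x) ^ 2)) :=
  stmt_5_general Ω hΩ b c hb hc u hu hupos hsuper φ hφ hφc hφΩ
end

section
/- Let N ≥ 3, R₀ > 0, Ω = {x ∈ ℝ^N : |x| > R₀}, and let E : Ω → ℝ be a smooth positive function with −ΔE ≥ 0 on Ω. Then liminf_{|x|→∞} |x|² · (−ΔE(x))/E(x) ≤ (N−2)²/4. -/
/-!
Suppose the liminf exceeds some `c > (N - 2)² / 4`, so that `-ΔE > c E / |x|²` far out. With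
`α = (N - 2) / 2` and `β = √(c - α²) > 0`, the radial function
`v(x) = |x|^{-α} sin(β (log |x| - a))` solves `-Δv = c v / |x|²`; it is positive in the annulus
`a < log |x| < a + π / β` and vanishes on its boundary. This oscillation is only possible because
`c > α²`. The largest multiple `κ v` lying below `E` on the annulus touches `E` at an interior
point `x₀`, where `Δ(E - κ v)(x₀) ≥ 0`, i.e. `-ΔE(x₀) ≤ c E(x₀) / |x₀|²`: a contradiction.
-/

open MeasureTheory Filter

open Set Topology Real
open scoped RealInnerProductSpace

theorem IsLocalMin.nonneg_of_hasDerivAt_of_hasDerivAt {f f' : ℝ → ℝ} {a x : ℝ}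
    (hmin : IsLocalMin f x) (hf : ∀ᶠ t in 𝓝 x, HasDerivAt f (f' t) t)
    (hf' : HasDerivAt f' a x) : 0 ≤ a := by
  by_contra! ha
  have hx : f' x = 0 := hmin.hasDerivAt_eq_zero hf.self_of_nhds
  -- the slope of `f'` at `x` tends to `a < 0`, so `f'` is negative just to the right of `x`
  have hneg : ∀ᶠ t in 𝓝[>] x, f' t < 0 := by
    have := (hasDerivAt_iff_tendsto_slope.mp hf').eventually_lt_const ha
    filter_upwards [nhdsWithin_mono _ (fun t (ht : x < t) => ht.ne') this,
      self_mem_nhdsWithin] with t hslope (hxt : x < t)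
    rw [slope_def_field, hx, sub_zero] at hslope
    exact ((div_neg_iff.mp hslope).resolve_left fun h => h.2.not_gt (sub_pos.mpr hxt)).1
  obtain ⟨l, u, ⟨hlx, hxu⟩, hsub⟩ := mem_nhds_iff_exists_Ioo_subset.mp
    (hf.and (hmin.and (eventually_nhdsWithin_iff.mp hneg)))
  obtain ⟨t, hxt, htu⟩ := exists_between hxu
  have hIcc : Icc x t ⊆ Ioo l u := Icc_subset_Ioo hlx htu
  obtain ⟨ξ, hξ, hslope⟩ := exists_hasDerivAt_eq_slope f f' hxt
    (fun s hs => (hsub (hIcc hs)).1.continuousAt.continuousWithinAt)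
    (fun s hs => (hsub (hIcc (Ioo_subset_Icc_self hs))).1)
  have hft : f x ≤ f t := (hsub (hIcc (right_mem_Icc.mpr hxt.le))).2.1
  have hfξ : f' ξ < 0 := (hsub (hIcc (Ioo_subset_Icc_self hξ))).2.2 hξ.1
  rw [hslope] at hfξ
  exact hfξ.not_ge (div_nonneg (sub_nonneg.mpr hft) (sub_pos.mpr hxt).le)

theorem IsLocalMin.fderiv_fderiv_apply_nonneg {F : Type*} [NormedAddCommGroup F]
    [NormedSpace ℝ F] {f : F → ℝ} {x : F} (hmin : IsLocalMin f x) (hf : ContDiffAt ℝ 2 f x)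
    (v : F) : 0 ≤ fderiv ℝ (fun y => fderiv ℝ f y v) x v := by
  have hline : ∀ t : ℝ, HasDerivAt (fun s : ℝ => x + s • v) v t := fun t => by
    simpa using ((hasDerivAt_id t).smul_const v).const_add x
  have hcont : Continuous fun s : ℝ => x + s • v := by fun_prop
  have hx : x + (0 : ℝ) • v = x := by simp
  have hdiff : ∀ᶠ t in 𝓝 (0 : ℝ), DifferentiableAt ℝ f (x + t • v) := by
    have := (hf.eventually (by simp)).mono fun y hy => hy.differentiableAt two_ne_zero
    exact (hcont.tendsto 0).eventually (by rwa [hx])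
  have hdiff' : DifferentiableAt ℝ (fun y => fderiv ℝ f y v) (x + (0 : ℝ) • v) := by
    rw [hx]
    exact ((hf.fderiv_right (m := 1) le_rfl).differentiableAt one_ne_zero).clm_apply
      (differentiableAt_const v)
  have hmin' : IsLocalMin f (x + (0 : ℝ) • v) := by rwa [hx]
  refine (hmin'.comp_continuous (g := fun s : ℝ => x + s • v) hcont.continuousAt
    ).nonneg_of_hasDerivAt_of_hasDerivAt
    (hdiff.mono fun t ht => ht.hasFDerivAt.comp_hasDerivAt t (hline t)) ?_
  have := hdiff'.hasFDerivAt.comp_hasDerivAt 0 (hline 0)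
  rwa [hx] at this

theorem fderiv_fderiv_apply_sub_const_mul {F : Type*} [NormedAddCommGroup F] [NormedSpace ℝ F]
    {f g : F → ℝ} {x : F} (hf : ContDiffAt ℝ 2 f x) (hg : ContDiffAt ℝ 2 g x) (κ : ℝ) (v : F) :
    fderiv ℝ (fun y => fderiv ℝ (fun z => f z - κ * g z) y v) x v =
      fderiv ℝ (fun y => fderiv ℝ f y v) x v - κ * fderiv ℝ (fun y => fderiv ℝ g y v) x v := by
  have hfirst : (fun y => fderiv ℝ (fun z => f z - κ * g z) y v) =ᶠ[𝓝 x]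
      fun y => fderiv ℝ f y v - κ * fderiv ℝ g y v := by
    filter_upwards [hf.eventually (by simp), hg.eventually (by simp)] with y hfy hgy
    have hfy := hfy.differentiableAt two_ne_zero
    have hgy := hgy.differentiableAt two_ne_zero
    simp [fderiv_fun_sub hfy (hgy.const_mul κ), fderiv_const_mul hgy κ]
  have hdiff : ∀ {h : F → ℝ}, ContDiffAt ℝ 2 h x →
      DifferentiableAt ℝ (fun y => fderiv ℝ h y v) x := fun hh =>
    ((hh.fderiv_right (m := 1) le_rfl).differentiableAt one_ne_zero).clm_apply
      (differentiableAt_const v)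
  rw [hfirst.fderiv_eq, fderiv_fun_sub (hdiff hf) ((hdiff hg).const_mul κ),
    fderiv_const_mul (hdiff hg) κ]
  simp

theorem lap_sub_const_mul {N : ℕ} {f g : EuclideanSpace ℝ (Fin N) → ℝ}
    {x : EuclideanSpace ℝ (Fin N)} (hf : ContDiffAt ℝ 2 f x) (hg : ContDiffAt ℝ 2 g x) (κ : ℝ) :
    lap (fun y => f y - κ * g y) x = lap f x - κ * lap g x := by
  simp only [lap, fderiv_fderiv_apply_sub_const_mul hf hg, Finset.sum_sub_distrib,
    Finset.mul_sum]

theorem lap_nonneg_of_isLocalMin {N : ℕ} {f : EuclideanSpace ℝ (Fin N) → ℝ}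
    {x : EuclideanSpace ℝ (Fin N)} (hmin : IsLocalMin f x) (hf : ContDiffAt ℝ 2 f x) :
    0 ≤ lap f x :=
  Finset.sum_nonneg fun _ _ => hmin.fderiv_fderiv_apply_nonneg hf _

theorem const_mul_lap_le_of_isLocalMin_sub {N : ℕ} {f g : EuclideanSpace ℝ (Fin N) → ℝ}
    {x : EuclideanSpace ℝ (Fin N)} {κ : ℝ} (hmin : IsLocalMin (fun y => f y - κ * g y) x)
    (hf : ContDiffAt ℝ 2 f x) (hg : ContDiffAt ℝ 2 g x) : κ * lap g x ≤ lap f x := by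
  have := lap_nonneg_of_isLocalMin hmin (hf.sub (contDiffAt_const.mul hg))
  rw [lap_sub_const_mul hf hg] at this
  linarith

theorem IsCompact.exists_isLocalMin_sub_const_mul {X : Type*} [TopologicalSpace X]
    {K O : Set X} {E v : X → ℝ} (hK : IsCompact K) (hO : IsOpen O) (hOK : O ⊆ K)
    (hE : ContinuousOn E K) (hv : ContinuousOn v K) (hEpos : ∀ x ∈ K, 0 < E x)
    (hv_le : ∀ x ∈ K \ O, v x ≤ 0) {p : X} (hp : p ∈ K) (hvp : 0 < v p) :
    ∃ x₀ ∈ O, ∃ κ > 0, E x₀ = κ * v x₀ ∧ IsLocalMin (fun y => E y - κ * v y) x₀ := by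
  -- touch `E` from below by the largest multiple of `v` that fits under it on `K`
  obtain ⟨x₀, hx₀K, hmax⟩ := hK.exists_isMaxOn ⟨p, hp⟩
    (hv.div hE fun x hx => (hEpos x hx).ne')
  have hEx₀ := hEpos x₀ hx₀K
  have hvx₀ : 0 < v x₀ := by
    have : 0 < v x₀ / E x₀ := (div_pos hvp (hEpos p hp)).trans_le (hmax hp)
    exact (div_pos_iff_of_pos_right hEx₀).mp this
  have hx₀O : x₀ ∈ O := by_contra fun h => (hv_le x₀ ⟨hx₀K, h⟩).not_gt hvx₀
  refine ⟨x₀, hx₀O, E x₀ / v x₀, div_pos hEx₀ hvx₀, by field_simp, ?_⟩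
  filter_upwards [hO.mem_nhds hx₀O] with y hyO
  have hy : v y / E y ≤ v x₀ / E x₀ := hmax (hOK hyO)
  rw [div_le_div_iff₀ (hEpos y (hOK hyO)) hEx₀] at hy
  have : E x₀ / v x₀ * v y ≤ E y := by
    rw [div_mul_eq_mul_div, div_le_iff₀ hvx₀]; linarith
  show E x₀ - E x₀ / v x₀ * v x₀ ≤ E y - E x₀ / v x₀ * v y
  rw [div_mul_cancel₀ _ hvx₀.ne', sub_self]
  linarith

theorem hasFDerivAt_log_norm {F : Type*} [NormedAddCommGroup F] [InnerProductSpace ℝ F]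
    {x : F} (hx : x ≠ 0) :
    HasFDerivAt (fun y => log ‖y‖) ((‖x‖ ^ 2)⁻¹ • innerSL ℝ x) x := by
  have hsq := ((hasDerivAt_log (by positivity : ‖x‖ ^ 2 ≠ 0)).comp_hasFDerivAt x
    (hasStrictFDerivAt_norm_sq x).hasFDerivAt).const_mul (2⁻¹ : ℝ)
  have hfun : (fun y => log ‖y‖) = fun y => 2⁻¹ * (log ∘ fun y : F => ‖y‖ ^ 2) y := by
    ext; simp [Real.log_pow]
  rw [hfun]
  refine hsq.congr_fderiv ?_
  ext e
  simp only [smul_apply, innerSL_apply_apply, smul_eq_mul]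
  ring

theorem fderiv_fderiv_comp_log_norm_apply {F : Type*} [NormedAddCommGroup F]
    [InnerProductSpace ℝ F] {g g' g'' : ℝ → ℝ} (hg : ∀ t, HasDerivAt g (g' t) t)
    (hg' : ∀ t, HasDerivAt g' (g'' t) t) {x : F} (hx : x ≠ 0) (e : F) :
    fderiv ℝ (fun y => fderiv ℝ (fun z => g (log ‖z‖)) y e) x e =
      (g'' (log ‖x‖) - 2 * g' (log ‖x‖)) * ⟪x, e⟫ ^ 2 / ‖x‖ ^ 4
        + g' (log ‖x‖) * ‖e‖ ^ 2 / ‖x‖ ^ 2 := by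
  have hfirst : (fun y => fderiv ℝ (fun z => g (log ‖z‖)) y e) =ᶠ[𝓝 x]
      fun y => g' (log ‖y‖) * (⟪e, y⟫ * (‖y‖ ^ 2)⁻¹) := by
    filter_upwards [eventually_ne_nhds hx] with y hy
    rw [(show HasFDerivAt (fun z => g (log ‖z‖)) _ y from
      (hg _).comp_hasFDerivAt y (hasFDerivAt_log_norm hy)).fderiv]
    simp [real_inner_comm, mul_comm]
  have hinv := (hasDerivAt_inv (by positivity : ‖x‖ ^ 2 ≠ 0)).comp_hasFDerivAt x
    (hasStrictFDerivAt_norm_sq x).hasFDerivAt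
  have hprod : HasFDerivAt (fun y => g' (log ‖y‖) * (⟪e, y⟫ * (‖y‖ ^ 2)⁻¹)) _ x :=
    ((hg' _).comp_hasFDerivAt x (hasFDerivAt_log_norm hx)).mul
      ((innerSL ℝ e).hasFDerivAt.mul hinv)
  rw [hfirst.fderiv_eq, hprod.fderiv]
  have : ‖x‖ ≠ 0 := norm_ne_zero_iff.mpr hx
  simp only [Function.comp_apply, coe_innerSL_apply, real_inner_comm, neg_smul, smul_neg,
    smul_add, add_apply, neg_apply, smul_apply, nsmul_eq_mul, Nat.cast_ofNat, smul_eq_mul,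
    inner_self_eq_norm_sq_to_K, ringHom_apply]
  field_simp
  ring

theorem lap_comp_log_norm {N : ℕ} {g g' g'' : ℝ → ℝ} (hg : ∀ t, HasDerivAt g (g' t) t)
    (hg' : ∀ t, HasDerivAt g' (g'' t) t) {x : EuclideanSpace ℝ (Fin N)} (hx : x ≠ 0) :
    lap (fun y => g (log ‖y‖)) x = (g'' (log ‖x‖) + (N - 2) * g' (log ‖x‖)) / ‖x‖ ^ 2 := by
  have hsum : ∑ i, ⟪x, EuclideanSpace.single i 1⟫ ^ 2 = ‖x‖ ^ 2 := by
    simp [EuclideanSpace.real_norm_sq_eq, EuclideanSpace.inner_single_right]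
  have : ‖x‖ ≠ 0 := norm_ne_zero_iff.mpr hx
  simp only [lap, fderiv_fderiv_comp_log_norm_apply hg hg' hx, Finset.sum_add_distrib,
    ← Finset.sum_div, ← Finset.mul_sum, hsum, PiLp.norm_single, norm_one, one_pow,
    Finset.sum_const, Finset.card_univ, Fintype.card_fin, nsmul_eq_mul, mul_one]
  field_simp
  ring

noncomputable def dampedSin (α β a t : ℝ) : ℝ := exp (-(α * t)) * sin (β * (t - a))

theorem lap_dampedSin_comp_log_norm {N : ℕ} {α : ℝ} (hα : 2 * α = N - 2) (β a : ℝ)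
    {x : EuclideanSpace ℝ (Fin N)} (hx : x ≠ 0) :
    lap (fun y => dampedSin α β a (log ‖y‖)) x =
      -(α ^ 2 + β ^ 2) * dampedSin α β a (log ‖x‖) / ‖x‖ ^ 2 := by
  have hexp (t : ℝ) : HasDerivAt (fun t => exp (-(α * t))) (-α * exp (-(α * t))) t := by
    simpa [mul_comm] using ((hasDerivAt_id t).const_mul α).neg.exp
  have hlin (t : ℝ) : HasDerivAt (fun t => β * (t - a)) β t := by
    simpa using ((hasDerivAt_id t).sub_const a).const_mul β
  have h1 (t : ℝ) : HasDerivAt (dampedSin α β a)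
      (exp (-(α * t)) * (β * cos (β * (t - a)) - α * sin (β * (t - a)))) t :=
    ((hexp t).fun_mul (hlin t).sin).congr_deriv (by ring)
  have h2 (t : ℝ) : HasDerivAt
      (fun t => exp (-(α * t)) * (β * cos (β * (t - a)) - α * sin (β * (t - a))))
      (exp (-(α * t)) * ((α ^ 2 - β ^ 2) * sin (β * (t - a)) - 2 * α * β * cos (β * (t - a))))
      t :=
    ((hexp t).fun_mul (((hlin t).cos.const_mul β).fun_sub
      ((hlin t).sin.const_mul α))).congr_deriv (by ring)
  rw [lap_comp_log_norm h1 h2 hx, ← hα, dampedSin]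
  ring

theorem contDiffAt_dampedSin_log_norm {F : Type*} [NormedAddCommGroup F]
    [InnerProductSpace ℝ F] {n : WithTop ℕ∞} (α β a : ℝ) {x : F} (hx : x ≠ 0) :
    ContDiffAt ℝ n (fun y => dampedSin α β a (log ‖y‖)) x := by
  have hds : ContDiff ℝ n (dampedSin α β a) := by unfold dampedSin; fun_prop
  exact hds.contDiffAt.comp x ((contDiffAt_log.mpr (norm_ne_zero_iff.mpr hx)).comp x
    (contDiffAt_norm ℝ hx))

theorem exists_isLocalMin_sub_const_mul_dampedSin_log_norm {N : ℕ} (hN : 0 < N) (α : ℝ)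
    {β : ℝ} (hβ : 0 < β) (a : ℝ) {E : EuclideanSpace ℝ (Fin N) → ℝ}
    (hE : ∀ x, exp a ≤ ‖x‖ → ContinuousAt E x) (hEpos : ∀ x, exp a ≤ ‖x‖ → 0 < E x) :
    ∃ x₀, exp a < ‖x₀‖ ∧ ∃ κ > 0, E x₀ = κ * dampedSin α β a (log ‖x₀‖) ∧
      IsLocalMin (fun y => E y - κ * dampedSin α β a (log ‖y‖)) x₀ := by
  have : Nonempty (Fin N) := ⟨⟨0, hN⟩⟩
  set v : EuclideanSpace ℝ (Fin N) → ℝ := fun y => dampedSin α β a (log ‖y‖)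
  set K := Metric.closedBall (0 : EuclideanSpace ℝ (Fin N)) (exp (a + π / β)) \
    Metric.ball 0 (exp a)
  set O := Metric.ball (0 : EuclideanSpace ℝ (Fin N)) (exp (a + π / β)) \
    Metric.closedBall 0 (exp a)
  have hOK : O ⊆ K := sdiff_subset_sdiff Metric.ball_subset_closedBall Metric.ball_subset_closedBall
  have hK : ∀ x ∈ K, exp a ≤ ‖x‖ := fun x hx => by simpa using hx.2
  have hv_bdry : ∀ x ∈ K \ O, v x ≤ 0 := by
    rintro x ⟨⟨hx₂, hx₁⟩, hxO⟩
    replace hx₂ : ‖x‖ ≤ exp (a + π / β) := by simpa using hx₂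
    replace hx₁ : exp a ≤ ‖x‖ := by simpa using hx₁
    have : ‖x‖ = exp a ∨ ‖x‖ = exp (a + π / β) := by
      by_contra! h
      exact hxO ⟨by simpa using hx₂.lt_of_ne h.2, by simpa using hx₁.lt_of_ne h.1.symm⟩
    rcases this with h | h <;> simp [v, dampedSin, h, mul_div_cancel₀ _ hβ.ne']
  obtain ⟨p, hp⟩ := exists_norm_eq (EuclideanSpace ℝ (Fin N)) (exp_pos (a + π / (2 * β))).le
  have hpK : p ∈ K := by
    have h₁ : 0 < π / (2 * β) := by positivity
    have h₂ : π / (2 * β) < π / β := div_lt_div_of_pos_left pi_pos hβ (by linarith)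
    simp only [K, Set.mem_sdiff, Metric.mem_closedBall, Metric.mem_ball, dist_zero_right, hp,
      exp_le_exp, exp_lt_exp, not_lt]
    constructor <;> linarith
  have hvp : 0 < v p := by
    have : β * (π / (2 * β)) = π / 2 := by field_simp
    simp [v, dampedSin, hp, this, exp_pos]
  have hv : ContinuousOn v K := fun x hx =>
    (contDiffAt_dampedSin_log_norm (n := 0) α β a
      (norm_pos_iff.mp ((exp_pos a).trans_le (hK x hx)))).continuousAt.continuousWithinAt
  obtain ⟨x₀, hx₀O, hκ⟩ := ((isCompact_closedBall _ _).diff Metric.isOpen_ball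
    ).exists_isLocalMin_sub_const_mul (Metric.isOpen_ball.sdiff Metric.isClosed_closedBall) hOK
    (fun x hx => (hE x (hK x hx)).continuousWithinAt) hv (fun x hx => hEpos x (hK x hx))
    hv_bdry hpK hvp
  exact ⟨x₀, by simpa using hx₀O.2, hκ⟩

theorem exists_norm_sq_mul_neg_lap_div_le {N : ℕ} (hN : 0 < N) {c : ℝ}
    (hc : ((N : ℝ) - 2) ^ 2 / 4 < c) {R₀ : ℝ} {E : EuclideanSpace ℝ (Fin N) → ℝ}
    (hE : ContDiffOn ℝ 2 E {x | R₀ < ‖x‖}) (hEpos : ∀ x, R₀ < ‖x‖ → 0 < E x) (R : ℝ) :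
    ∃ x, R < ‖x‖ ∧ ‖x‖ ^ 2 * -lap E x / E x ≤ c := by
  set α : ℝ := (N - 2) / 2
  set β : ℝ := √(c - α ^ 2)
  set a : ℝ := max R R₀
  have hcα : α ^ 2 < c := by simp only [α]; linarith
  have hαβ : α ^ 2 + β ^ 2 = c := by rw [sq_sqrt (by linarith)]; ring
  have ha : ∀ x : EuclideanSpace ℝ (Fin N), exp a ≤ ‖x‖ → R < ‖x‖ ∧ R₀ < ‖x‖ := fun x hx =>
    max_lt_iff.mp ((by linarith [add_one_le_exp a] : a < exp a).trans_le hx)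
  have hEC : ∀ x : EuclideanSpace ℝ (Fin N), exp a ≤ ‖x‖ → ContDiffAt ℝ 2 E x := fun x hx =>
    hE.contDiffAt ((isOpen_lt continuous_const continuous_norm).mem_nhds (ha x hx).2)
  obtain ⟨x₀, hx₀, κ, -, hEv, hmin⟩ := exists_isLocalMin_sub_const_mul_dampedSin_log_norm hN α
    (sqrt_pos.mpr (sub_pos.mpr hcα)) a (fun x hx => (hEC x hx).continuousAt)
    (fun x hx => hEpos x (ha x hx).2)
  have hx₀0 : x₀ ≠ 0 := norm_pos_iff.mp ((exp_pos a).trans hx₀)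
  have hlap := const_mul_lap_le_of_isLocalMin_sub hmin (hEC x₀ hx₀.le)
    (contDiffAt_dampedSin_log_norm α β a hx₀0)
  rw [lap_dampedSin_comp_log_norm (by ring) β a hx₀0, hαβ] at hlap
  have hE₀ : 0 < E x₀ := hEpos x₀ (ha x₀ hx₀.le).2
  have hlapE : -lap E x₀ ≤ c * E x₀ / ‖x₀‖ ^ 2 := by
    have : κ * (-c * dampedSin α β a (log ‖x₀‖) / ‖x₀‖ ^ 2) = -(c * E x₀ / ‖x₀‖ ^ 2) := by
      rw [hEv]; ring
    linarith
  refine ⟨x₀, (ha x₀ hx₀.le).1, ?_⟩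
  have : 0 < ‖x₀‖ := norm_pos_iff.mpr hx₀0
  rw [div_le_iff₀ hE₀]
  calc ‖x₀‖ ^ 2 * -lap E x₀ ≤ ‖x₀‖ ^ 2 * (c * E x₀ / ‖x₀‖ ^ 2) := by gcongr
    _ = c * E x₀ := by field_simp

theorem stmt_14_general {N : ℕ} (hN : 3 ≤ N) (R₀ : ℝ)
    (E : EuclideanSpace ℝ (Fin N) → ℝ)
    (hE : ContDiffOn ℝ (⊤ : ℕ∞) E {x | R₀ < ‖x‖})
    (hEpos : ∀ x : EuclideanSpace ℝ (Fin N), R₀ < ‖x‖ → 0 < E x) :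
    Filter.liminf
        (fun x : EuclideanSpace ℝ (Fin N) => ((‖x‖ ^ 2 * (-(lap E x)) / E x : ℝ) : EReal))
        (Filter.comap (fun x : EuclideanSpace ℝ (Fin N) => ‖x‖) Filter.atTop) ≤
      ((((N : ℝ) - 2) ^ 2 / 4 : ℝ) : EReal) := by
  refine le_of_forall_gt_imp_ge_of_dense fun c hc => ?_
  obtain ⟨c', hc', hc'c⟩ := EReal.lt_iff_exists_real_btwn.mp hc
  refine (liminf_le_of_frequently_le' ?_).trans hc'c.le
  rw [frequently_comap, frequently_atTop]
  intro R
  obtain ⟨x, hRx, hx⟩ := exists_norm_sq_mul_neg_lap_div_le (by omega)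
    (EReal.coe_lt_coe_iff.mp hc') (hE.of_le (WithTop.coe_le_coe.mpr le_top)) hEpos R
  exact ⟨‖x‖, hRx.le, x, rfl, EReal.coe_le_coe_iff.mpr hx⟩

theorem stmt_14 {N : ℕ} (hN : 3 ≤ N) (R₀ : ℝ) (hR₀ : 0 < R₀)
    (E : EuclideanSpace ℝ (Fin N) → ℝ)
    (hE : ContDiffOn ℝ (⊤ : ℕ∞) E {x | R₀ < ‖x‖})
    (hEpos : ∀ x : EuclideanSpace ℝ (Fin N), R₀ < ‖x‖ → 0 < E x)
    (hEsuper : ∀ x : EuclideanSpace ℝ (Fin N), R₀ < ‖x‖ → 0 ≤ -(lap E x)) :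
    Filter.liminf
        (fun x : EuclideanSpace ℝ (Fin N) => ((‖x‖ ^ 2 * (-(lap E x)) / E x : ℝ) : EReal))
        (Filter.comap (fun x : EuclideanSpace ℝ (Fin N) => ‖x‖) Filter.atTop) ≤
      ((((N : ℝ) - 2) ^ 2 / 4 : ℝ) : EReal) :=
  stmt_14_general hN R₀ E hE hEpos
end
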